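/- In the graded ring H = ℤ[u,y]/(u³, y³ − 3uy² + 6u²y), the element h := y² − 3uy + 6u² satisfies h·y² = 0, h² = 6·(u²y²), and 2h = 3a − y² where a = y² − 2uy + 4u². Consequently 2h + y² is divisible by 3 in H. -/

import Mathlib

open MvPolynomial

/-- The polynomial ring ℤ[u, y] in the classes u (pulled back hyperplane class)
and y (relative hyperplane class). -/
abbrev P2 := MvPolynomial (Fin 2) ℤ

/-- u as a polynomial variable. -/
noncomputable def uP : P2 := X 0

/-- y as a polynomial variable. -/
noncomputable def yP : P2 := X 1

/-- The relations ideal (u³, y³ − 3uy² + 6u²y). -/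
noncomputable def relIdeal : Ideal P2 :=
  Ideal.span {uP ^ 3, yP ^ 3 - 3 * uP * yP ^ 2 + 6 * uP ^ 2 * yP}

/-- The cohomology ring H = ℤ[u,y]/(u³, y³ − 3uy² + 6u²y) of the resolution Ỹ
of the secant variety of the Veronese surface. -/
abbrev H := P2 ⧸ relIdeal

/-- The class u in H. -/
noncomputable def u : H := Ideal.Quotient.mk _ uP

/-- The class y in H. -/
noncomputable def y : H := Ideal.Quotient.mk _ yP

/-- The special class h = y² − 3uy + 6u². -/
noncomputable def h : H := y ^ 2 - 3 * u * y + 6 * u ^ 2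

/-- The distinguished class a = y² − 2uy + 4u². -/
noncomputable def a : H := y ^ 2 - 2 * u * y + 4 * u ^ 2

/-! `h y²` is `y` times the cubic relation, and
`h² - 6u²y² = (36u - 18y) u³ + (y - 3u) (y³ - 3uy² + 6u²y)`. -/

section Relations

variable {R : Type*} [CommRing R] {u y : R}

theorem special_mul_sq_eq_zero (hy : y ^ 3 - 3 * u * y ^ 2 + 6 * u ^ 2 * y = 0) :
    (y ^ 2 - 3 * u * y + 6 * u ^ 2) * y ^ 2 = 0 := by
  linear_combination y * hy

theorem special_sq (hu : u ^ 3 = 0) (hy : y ^ 3 - 3 * u * y ^ 2 + 6 * u ^ 2 * y = 0) :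
    (y ^ 2 - 3 * u * y + 6 * u ^ 2) ^ 2 = 6 * (u ^ 2 * y ^ 2) := by
  linear_combination (36 * u - 18 * y) * hu + (y - 3 * u) * hy

end Relations

theorem u_pow_three : u ^ 3 = 0 := by
  rw [u, ← map_pow, Ideal.Quotient.eq_zero_iff_mem]
  exact Ideal.subset_span (Set.mem_insert _ _)

theorem y_cubic_relation : y ^ 3 - 3 * u * y ^ 2 + 6 * u ^ 2 * y = 0 := by
  have hmem : yP ^ 3 - 3 * uP * yP ^ 2 + 6 * uP ^ 2 * yP ∈ relIdeal :=
    Ideal.subset_span (Set.mem_insert_of_mem _ rfl)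
  simpa only [u, y, map_sub, map_add, map_mul, map_pow, map_ofNat] using
    Ideal.Quotient.eq_zero_iff_mem.mpr hmem

theorem stmt15 :
    h * y ^ 2 = 0 ∧
    h ^ 2 = 6 * (u ^ 2 * y ^ 2) ∧
    2 * h = 3 * a - y ^ 2 ∧
    ∃ c : H, 2 * h + y ^ 2 = 3 * c := by
  have two_mul_h : 2 * h = 3 * a - y ^ 2 := by
    rw [h, a]
    ring
  exact ⟨special_mul_sq_eq_zero y_cubic_relation, special_sq u_pow_three y_cubic_relation,
    two_mul_h, a, by rw [two_mul_h]; ring⟩
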